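/- Let φ₄ : ℂ[Z₃, Z₇, Z₈] → ℂ[t] be the ℂ-algebra homomorphism determined by Z₃ ↦ t³, Z₇ ↦ t⁷, Z₈ ↦ t⁸. Then the kernel of φ₄ is the ideal generated by the three polynomials Z₇² − Z₃²Z₈, Z₇Z₈ − Z₃⁵, and Z₈² − Z₃³Z₇. -/

import Mathlib

/-!
Modulo the three relations every polynomial reduces to a normal form `A(Z₃) + B(Z₃) Z₇ + C(Z₃) Z₈`,
since they rewrite `Z₇²`, `Z₇ Z₈` and `Z₈²` as multiples of `Z₈`, a power of `Z₃` and `Z₇`. The image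
`A(t³) + t⁷ B(t³) + t⁸ C(t³)` of a normal form has its three summands supported on the three
residue classes of exponents modulo 3, so it vanishes only when `A = B = C = 0`.
-/

open MvPolynomial

namespace Polynomial

variable {R : Type*} [CommSemiring R] {p : ℕ}

theorem coeff_X_pow_mul_expand_mul_add (hp : 0 < p) (f : R[X]) (r n : ℕ) :
    (X ^ r * expand R p f).coeff (p * n + r) = f.coeff n := by
  rw [coeff_X_pow_mul, coeff_expand_mul' hp]

theorem coeff_X_pow_mul_expand_mul_add_of_not_modEq (hp : 0 < p) (f : R[X]) {r s : ℕ}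
    (hrs : ¬ r ≡ s [MOD p]) (n : ℕ) : (X ^ r * expand R p f).coeff (p * n + s) = 0 := by
  have hrm : ¬ r ≡ p * n + s [MOD p] := fun h => hrs (h.trans (by simp [Nat.ModEq]))
  rw [coeff_X_pow_mul']
  split_ifs with hle
  · rw [coeff_expand hp, if_neg (mt (Nat.modEq_iff_dvd' hle).2 hrm)]
  · rfl

theorem eq_zero_of_X_pow_mul_expand_add_eq_zero (hp : 0 < p) {a b c : ℕ}
    (hab : ¬ a ≡ b [MOD p]) (hac : ¬ a ≡ c [MOD p]) (hbc : ¬ b ≡ c [MOD p]) {f g h : R[X]}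
    (hfgh : X ^ a * expand R p f + X ^ b * expand R p g + X ^ c * expand R p h = 0) :
    f = 0 ∧ g = 0 ∧ h = 0 := by
  have hcoeff (m : ℕ) : (X ^ a * expand R p f).coeff m + (X ^ b * expand R p g).coeff m
      + (X ^ c * expand R p h).coeff m = 0 := by
    rw [← coeff_add, ← coeff_add, hfgh, coeff_zero]
  have hba := mt Nat.ModEq.symm hab
  have hca := mt Nat.ModEq.symm hac
  have hcb := mt Nat.ModEq.symm hbc
  refine ⟨ext fun n => ?_, ext fun n => ?_, ext fun n => ?_⟩
  · simpa [coeff_X_pow_mul_expand_mul_add hp, coeff_X_pow_mul_expand_mul_add_of_not_modEq hp,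
      hba, hca] using hcoeff (p * n + a)
  · simpa [coeff_X_pow_mul_expand_mul_add hp, coeff_X_pow_mul_expand_mul_add_of_not_modEq hp,
      hab, hcb] using hcoeff (p * n + b)
  · simpa [coeff_X_pow_mul_expand_mul_add hp, coeff_X_pow_mul_expand_mul_add_of_not_modEq hp,
      hac, hbc] using hcoeff (p * n + c)

end Polynomial

section

variable (R : Type*) [CommRing R]

noncomputable abbrev phi4 : MvPolynomial (Fin 3) R →ₐ[R] Polynomial R :=
  aeval ![Polynomial.X ^ 3, Polynomial.X ^ 7, Polynomial.X ^ 8]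

noncomputable abbrev phi4Relations : Ideal (MvPolynomial (Fin 3) R) :=
  Ideal.span {X 1 ^ 2 - X 0 ^ 2 * X 2, X 1 * X 2 - X 0 ^ 5, X 2 ^ 2 - X 0 ^ 3 * X 1}

variable {R}

noncomputable def phi4NormalForm (A B C : Polynomial R) : MvPolynomial (Fin 3) R :=
  Polynomial.aeval (X 0) A + Polynomial.aeval (X 0) B * X 1 + Polynomial.aeval (X 0) C * X 2

theorem phi4Relations_le_ker : phi4Relations R ≤ RingHom.ker (phi4 R) := by
  rw [Ideal.span_le]
  rintro q (rfl | rfl | rfl) <;>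
    simp only [SetLike.mem_coe, RingHom.mem_ker, map_sub, map_mul, map_pow, aeval_X,
      Matrix.cons_val_zero, Matrix.cons_val_one, Matrix.cons_val] <;>
    ring

theorem exists_phi4NormalForm_mul_X_sub_mem (A B C : Polynomial R) (i : Fin 3) :
    ∃ A' B' C', phi4NormalForm A B C * X i - phi4NormalForm A' B' C' ∈ phi4Relations R := by
  have g1 : (X 1 ^ 2 - X 0 ^ 2 * X 2 : MvPolynomial (Fin 3) R) ∈ phi4Relations R :=
    Ideal.subset_span (by simp)
  have g2 : (X 1 * X 2 - X 0 ^ 5 : MvPolynomial (Fin 3) R) ∈ phi4Relations R :=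
    Ideal.subset_span (by simp)
  have g3 : (X 2 ^ 2 - X 0 ^ 3 * X 1 : MvPolynomial (Fin 3) R) ∈ phi4Relations R :=
    Ideal.subset_span (by simp)
  match i with
  | 0 =>
    refine ⟨A * .X, B * .X, C * .X, ?_⟩
    convert (phi4Relations R).zero_mem using 1
    simp only [phi4NormalForm, map_mul, Polynomial.aeval_X]
    ring
  | 1 =>
    refine ⟨C * .X ^ 5, A, B * .X ^ 2, ?_⟩
    convert (phi4Relations R).add_mem (Ideal.mul_mem_left _ (Polynomial.aeval (X 0) B) g1)
      (Ideal.mul_mem_left _ (Polynomial.aeval (X 0) C) g2) using 1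
    simp only [phi4NormalForm, map_mul, map_pow, Polynomial.aeval_X]
    ring
  | 2 =>
    refine ⟨B * .X ^ 5, C * .X ^ 3, A, ?_⟩
    convert (phi4Relations R).add_mem (Ideal.mul_mem_left _ (Polynomial.aeval (X 0) B) g2)
      (Ideal.mul_mem_left _ (Polynomial.aeval (X 0) C) g3) using 1
    simp only [phi4NormalForm, map_mul, map_pow, Polynomial.aeval_X]
    ring

theorem exists_sub_phi4NormalForm_mem (f : MvPolynomial (Fin 3) R) :
    ∃ A B C, f - phi4NormalForm A B C ∈ phi4Relations R := by
  induction f using MvPolynomial.induction_on with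
  | C a => exact ⟨.C a, 0, 0, by simp [phi4NormalForm]⟩
  | add f g hf hg =>
    obtain ⟨A, B, C, hf⟩ := hf
    obtain ⟨A', B', C', hg⟩ := hg
    refine ⟨A + A', B + B', C + C', ?_⟩
    convert (phi4Relations R).add_mem hf hg using 1
    simp only [phi4NormalForm, map_add]
    ring
  | mul_X f i hf =>
    obtain ⟨A, B, C, hf⟩ := hf
    obtain ⟨A', B', C', hX⟩ := exists_phi4NormalForm_mul_X_sub_mem A B C i
    refine ⟨A', B', C', ?_⟩
    convert (phi4Relations R).add_mem (Ideal.mul_mem_right (X i) _ hf) hX using 1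
    ring

theorem phi4_aeval_X_zero (A : Polynomial R) :
    phi4 R (Polynomial.aeval (X 0) A) = Polynomial.expand R 3 A := by
  rw [← Polynomial.aeval_X_left_apply (Polynomial.expand R 3 A), Polynomial.expand_aeval,
    ← Polynomial.aeval_algHom_apply, aeval_X]
  rfl

theorem phi4_phi4NormalForm (A B C : Polynomial R) :
    phi4 R (phi4NormalForm A B C) = Polynomial.expand R 3 A
      + Polynomial.X ^ 7 * Polynomial.expand R 3 B + Polynomial.X ^ 8 * Polynomial.expand R 3 C := by
  simp [phi4NormalForm, phi4_aeval_X_zero, mul_comm]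

theorem ker_phi4_eq : RingHom.ker (phi4 R) = phi4Relations R := by
  refine le_antisymm (fun f hf => ?_) phi4Relations_le_ker
  obtain ⟨A, B, C, hfABC⟩ := exists_sub_phi4NormalForm_mem f
  have hABC : phi4 R (phi4NormalForm A B C) = 0 := by
    simpa [RingHom.mem_ker.1 hf] using phi4Relations_le_ker hfABC
  obtain ⟨rfl, rfl, rfl⟩ := Polynomial.eq_zero_of_X_pow_mul_expand_add_eq_zero
    (p := 3) (a := 0) (b := 7) (c := 8)
    (by norm_num) (by decide) (by decide) (by decide)
    (by simpa [phi4_phi4NormalForm] using hABC)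
  simpa [phi4NormalForm] using hfABC

end

theorem ker_phi4 :
    RingHom.ker (MvPolynomial.aeval
        (![Polynomial.X ^ 3, Polynomial.X ^ 7, Polynomial.X ^ 8] :
          Fin 3 → Polynomial ℂ) : MvPolynomial (Fin 3) ℂ →ₐ[ℂ] Polynomial ℂ) =
      Ideal.span {(X 1 : MvPolynomial (Fin 3) ℂ) ^ 2 - (X 0) ^ 2 * X 2,
        X 1 * X 2 - (X 0) ^ 5,
        (X 2) ^ 2 - (X 0) ^ 3 * X 1} :=
  ker_phi4_eq
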